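/- arXiv:2211.10832 — 2 statements merged into one kernel-verified Lean document; each statement's English description precedes it below -/
import Mathlib

section
/- (Memorization) For every function f : [0,1]^d → ℝ, every integer t ≥ 1 and every M ≥ 1, the constructed network satisfies |f(p) − f̂(p)| = 0 for every grid point p ∈ P. -/
open Finset MeasureTheory

noncomputable section

/-- The ReLU function σ(z) = max(0, z). -/
def relu (z : ℝ) : ℝ := max 0 z

/-- `digit d t i r` is the `r`-th digit (most significant first) of the base-(t+1)
representation of `i`, i.e. the vector π^i, so that `i = Σ_r (digit d t i r) * (t+1)^(d-1-r)`. -/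
def digit (d t i : ℕ) (r : Fin d) : ℕ := i / (t + 1) ^ (d - 1 - (r : ℕ)) % (t + 1)

/-- The grid point π^i / t ∈ [0,1]^d. -/
def gridPt (d t i : ℕ) : Fin d → ℝ := fun r => (digit d t i r : ℝ) / t

/-- A g-unit with coefficient `a` located at grid point `i`:
`x ↦ a · σ(Σ_r −M·σ(−x_r + π^i_r/t) + 1/t)`. -/
def gUnit (d t : ℕ) (M a : ℝ) (i : ℕ) (x : Fin d → ℝ) : ℝ :=
  a * relu ((∑ r : Fin d, -M * relu (-(x r) + gridPt d t i r)) + 1 / t)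

/-- `net d t M f i` is the partial network `b + Σ_{j=1}^{i} ĝ_j` of the recursive
construction (with `b = f 0`). -/
def net (d t : ℕ) (M : ℝ) (f : (Fin d → ℝ) → ℝ) : ℕ → (Fin d → ℝ) → ℝ
  | 0 => fun _ => f (fun _ => 0)
  | i + 1 => fun x =>
      net d t M f i x +
        gUnit d t M ((t : ℝ) * (f (gridPt d t (i + 1)) - net d t M f i (gridPt d t (i + 1))))
          (i + 1) x

/-- The coefficient `a_i = t·(f(π^i/t) − (b + Σ_{j=1}^{i−1} ĝ_j(π^i/t)))` of the
construction (meaningful for `i ≥ 1`). -/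
def coef (d t : ℕ) (M : ℝ) (f : (Fin d → ℝ) → ℝ) (i : ℕ) : ℝ :=
  (t : ℝ) * (f (gridPt d t i) - net d t M f (i - 1) (gridPt d t i))

/-- The g-unit `ĝ_i` of the construction. -/
def gHat (d t : ℕ) (M : ℝ) (f : (Fin d → ℝ) → ℝ) (i : ℕ) : (Fin d → ℝ) → ℝ :=
  gUnit d t M (coef d t M f i) i

/-- The constructed network `f̂(x) = b + Σ_{i=1}^{k−1} ĝ_i(x)`, `k = (t+1)^d`. -/
def fHat (d t : ℕ) (M : ℝ) (f : (Fin d → ℝ) → ℝ) (x : Fin d → ℝ) : ℝ :=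
  f (fun _ => 0) + ∑ i ∈ Finset.Icc 1 ((t + 1) ^ d - 1), gHat d t M f i x

/-- `f` is ρ-Lipschitz in 1-norm on the set `s`. -/
def LipOneNorm (d : ℕ) (ρ : ℝ) (s : Set (Fin d → ℝ)) (f : (Fin d → ℝ) → ℝ) : Prop :=
  ∀ x ∈ s, ∀ x' ∈ s, |f x - f x'| ≤ ρ * ∑ r : Fin d, |x r - x' r|

/-- The cell `C*_i = {x : π^i_r/t ≤ x_r ≤ π^i_r/t + 1/t ∀r}`. -/
def cellStar (d t i : ℕ) : Set (Fin d → ℝ) :=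
  {x | ∀ r : Fin d, gridPt d t i r ≤ x r ∧ x r ≤ gridPt d t i r + 1 / t}

/-- The inner cell `C_i = {x : π^i_r/t ≤ x_r ≤ π^i_r/t + 1/t − 1/(Mt) ∀r}`. -/
def cellInner (d t : ℕ) (M : ℝ) (i : ℕ) : Set (Fin d → ℝ) :=
  {x | ∀ r : Fin d, gridPt d t i r ≤ x r ∧ x r ≤ gridPt d t i r + (1 / t - 1 / (M * t))}

/-- The boundary region `C'_i = C*_i \ C_i`. -/
def cellBoundary (d t : ℕ) (M : ℝ) (i : ℕ) : Set (Fin d → ℝ) :=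
  cellStar d t i \ cellInner d t M i



lemma sum_digits (b : ℕ) (hb : 1 ≤ b) :
    ∀ k, ∀ n < b ^ k, ∑ r ∈ Finset.range k, n / b ^ r % b * b ^ r = n := by
  intro k
  induction k with
  | zero =>
    intro n hn
    have : n = 0 := Nat.lt_one_iff.mp (by simpa using hn)
    subst this; simp
  | succ k ih =>
    intro n hn
    rw [Finset.sum_range_succ']
    have hb0 : 0 < b := by omega
    have hdiv : n / b < b ^ k := by
      rw [Nat.div_lt_iff_lt_mul hb0]
      calc n < b ^ (k + 1) := hn
        _ = b ^ k * b := by ring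
    have h1 : ∀ r, n / b ^ (r + 1) % b * b ^ (r + 1)
        = b * (n / b / b ^ r % b * b ^ r) := by
      intro r
      rw [Nat.div_div_eq_div_mul, pow_succ']
      ring
    calc (∑ r ∈ Finset.range k, n / b ^ (r + 1) % b * b ^ (r + 1)) + n / b ^ 0 % b * b ^ 0
        = (∑ r ∈ Finset.range k, b * (n / b / b ^ r % b * b ^ r)) + n % b := by
          simp only [h1, pow_zero, Nat.div_one, mul_one]
      _ = b * (n / b) + n % b := by rw [← Finset.mul_sum, ih _ hdiv]
      _ = n := Nat.div_add_mod n b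

lemma le_of_digit_le (d t : ℕ) {i j : ℕ} (hi : i < (t + 1) ^ d) (hj : j < (t + 1) ^ d)
    (h : ∀ r : Fin d, digit d t j r ≤ digit d t i r) : j ≤ i := by
  have hi' := sum_digits (t + 1) (by omega) d i hi
  have hj' := sum_digits (t + 1) (by omega) d j hj
  calc j = ∑ r ∈ Finset.range d, j / (t+1) ^ r % (t+1) * (t+1) ^ r := hj'.symm
    _ ≤ ∑ r ∈ Finset.range d, i / (t+1) ^ r % (t+1) * (t+1) ^ r := by
        apply Finset.sum_le_sum
        intro r hr
        have hrd : r < d := Finset.mem_range.mp hr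
        have hd0 : 0 < d := by omega
        have hsub : d - 1 - (d - 1 - r) = r := by omega
        have := h ⟨d - 1 - r, by omega⟩
        simp only [digit, hsub] at this
        exact Nat.mul_le_mul_right _ this
    _ = i := hi'

lemma relu_nonneg (z : ℝ) : 0 ≤ relu z := le_max_left _ _

lemma net_eval_self (d t : ℕ) (ht : 1 ≤ t) (M : ℝ) (f : (Fin d → ℝ) → ℝ) (i : ℕ) :
    net d t M f i (gridPt d t i) = f (gridPt d t i) := by
  have ht0 : (0:ℝ) < t := by exact_mod_cast ht
  cases i with
  | zero =>
    have : gridPt d t 0 = fun _ => (0:ℝ) := by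
      funext r; simp [gridPt, digit]
    rw [net, this]
  | succ n =>
    simp only [net, gUnit]
    have h1 : ∀ r : Fin d, -(gridPt d t (n + 1) r) + gridPt d t (n + 1) r = 0 := by
      intro r; ring
    have h2 : (∑ r : Fin d, -M * relu (-(gridPt d t (n + 1) r) + gridPt d t (n + 1) r))
        + 1 / (t:ℝ) = 1 / t := by
      simp [h1, relu]
    rw [h2]
    have h3 : relu (1 / (t:ℝ)) = 1 / t := by
      simp [relu, le_of_lt (by positivity : (0:ℝ) < 1 / t)]
    rw [h3]
    field_simp
    ring

lemma gUnit_vanish (d t : ℕ) (ht : 1 ≤ t) (M : ℝ) (hM : 1 ≤ M) (a : ℝ) {i j : ℕ}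
    (hij : i < j) (hj : j < (t + 1) ^ d) :
    gUnit d t M a j (gridPt d t i) = 0 := by
  have ht0 : (0:ℝ) < t := by exact_mod_cast ht
  have hi : i < (t + 1) ^ d := lt_trans hij hj
  have hex : ∃ r : Fin d, digit d t i r < digit d t j r := by
    by_contra hcon
    push_neg at hcon
    exact absurd (le_of_digit_le d t hi hj hcon) (by omega)
  obtain ⟨r, hr⟩ := hex
  have key : (∑ r' : Fin d, -M * relu (-(gridPt d t i r') + gridPt d t j r'))
      ≤ -(1 / t) := by
    calc (∑ r' : Fin d, -M * relu (-(gridPt d t i r') + gridPt d t j r'))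
        ≤ ∑ r' : Fin d, (if r' = r then -(1 / (t:ℝ)) else 0) := by
          apply Finset.sum_le_sum
          intro r' _
          by_cases hrr : r' = r
          · subst hrr
            simp only [if_pos rfl]
            have heq : -(gridPt d t i r') + gridPt d t j r'
                = ((digit d t j r' : ℝ) - (digit d t i r' : ℝ)) / t := by
              simp only [gridPt]; ring
            have hval : (1:ℝ) / t ≤ -(gridPt d t i r') + gridPt d t j r' := by
              rw [heq, div_le_div_iff₀ ht0 ht0]
              have : (digit d t i r' : ℝ) + 1 ≤ (digit d t j r' : ℝ) := by
                exact_mod_cast hr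
              nlinarith
            have hrelu : 1 / (t:ℝ) ≤ relu (-(gridPt d t i r') + gridPt d t j r') :=
              le_trans hval (le_max_right _ _)
            have hM0 : (0:ℝ) < M := by linarith
            calc -M * relu (-(gridPt d t i r') + gridPt d t j r')
                ≤ -M * (1 / t) := by nlinarith
              _ ≤ -(1 / t) := by nlinarith [one_div_pos.mpr ht0]
          · simp only [if_neg hrr]
            have := relu_nonneg (-(gridPt d t i r') + gridPt d t j r')
            nlinarith
      _ = -(1 / t) := by simp
  have harg : (∑ r' : Fin d, -M * relu (-(gridPt d t i r') + gridPt d t j r'))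
      + 1 / (t:ℝ) ≤ 0 := by linarith
  rw [gUnit]
  have : relu ((∑ r' : Fin d, -M * relu (-(gridPt d t i r') + gridPt d t j r'))
      + 1 / (t:ℝ)) = 0 := max_eq_left harg
  rw [this, mul_zero]

lemma net_eval_above (d t : ℕ) (ht : 1 ≤ t) (M : ℝ) (hM : 1 ≤ M)
    (f : (Fin d → ℝ) → ℝ) (i : ℕ) :
    ∀ n, i ≤ n → n < (t + 1) ^ d → net d t M f n (gridPt d t i) = f (gridPt d t i) := by
  intro n
  induction n with
  | zero =>
    intro h1 _
    have : i = 0 := by omega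
    subst this
    exact net_eval_self d t ht M f 0
  | succ n ih =>
    intro h1 h2
    rcases Nat.eq_or_lt_of_le h1 with heq | hlt
    · rw [← heq]; exact net_eval_self d t ht M f i
    · simp only [net]
      rw [gUnit_vanish d t ht M hM _ (by omega : i < n + 1) h2, add_zero]
      exact ih (by omega) (by omega)

lemma net_eq_sum (d t : ℕ) (M : ℝ) (f : (Fin d → ℝ) → ℝ) :
    ∀ n x, net d t M f n x = f (fun _ => 0) + ∑ j ∈ Finset.Icc 1 n, gHat d t M f j x := by
  intro n
  induction n with
  | zero => intro x; simp [net]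
  | succ n ih =>
    intro x
    have hgh : gHat d t M f (n + 1) x
        = gUnit d t M ((t:ℝ) * (f (gridPt d t (n + 1)) - net d t M f n (gridPt d t (n + 1))))
            (n + 1) x := by
      simp [gHat, coef]
    simp only [net]
    rw [Finset.sum_Icc_succ_top (by omega : 1 ≤ n + 1), ← hgh, ih x]
    ring

/-- **Memorization.** For every f : [0,1]^d → ℝ, every integer t ≥ 1 and
every M ≥ 1, the constructed network satisfies |f(p) − f̂(p)| = 0 for every grid point
p = π^i/t ∈ P, 0 ≤ i ≤ (t+1)^d − 1. -/
theorem stmt_2 (d t : ℕ) (hd : 1 ≤ d) (ht : 1 ≤ t) (M : ℝ) (hM : 1 ≤ M)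
    (f : (Fin d → ℝ) → ℝ) :
    ∀ i < (t + 1) ^ d, |f (gridPt d t i) - fHat d t M f (gridPt d t i)| = 0 := by
  intro i hi
  have hk : 1 ≤ (t + 1) ^ d := Nat.one_le_pow _ _ (by omega)
  have hfh : fHat d t M f (gridPt d t i) = net d t M f ((t + 1) ^ d - 1) (gridPt d t i) := by
    rw [net_eq_sum, fHat]
  rw [hfh, net_eval_above d t ht M hM f i _ (by omega) (by omega), sub_self, abs_zero]


end
end

section
/- If f : [0,1]^d → ℝ is ρ-Lipschitz in 1-norm, then for every integer t ≥ 1, every M ≥ 1, every index i ∈ {0,…,k−1}, and every pair of points x, x' such that either (x ∈ C_i and x' ∈ C'_i) or (x ∈ C'_i and x' ∈ C'_i), the constructed network satisfies |f̂(x) − f̂(x')| ≤ k·d³·ρ·2^{d−1}/t. -/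
open Finset MeasureTheory

noncomputable section

/- Auxiliary lemmas -/

lemma pow_split {B n : ℕ} (hB : 1 ≤ B) : (B - 1) * B ^ n + B ^ n = B ^ n * B := by
  have h : B - 1 + 1 = B := by omega
  calc (B - 1) * B ^ n + B ^ n = (B - 1 + 1) * B ^ n := by ring
    _ = B ^ n * B := by rw [h]; ring

lemma encR_lt {B : ℕ} (hB : 1 ≤ B) {n : ℕ} {c : ℕ → ℕ} (hc : ∀ s < n, c s < B) :
    ∑ s ∈ range n, c s * B ^ s < B ^ n := by
  induction n with
  | zero => simp
  | succ n ih =>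
    rw [Finset.sum_range_succ, pow_succ]
    have h1 : ∑ s ∈ range n, c s * B ^ s < B ^ n := ih (fun s hs => hc s (Nat.lt_succ_of_lt hs))
    have h2 : c n ≤ B - 1 := Nat.le_sub_one_of_lt (hc n (Nat.lt_succ_self n))
    have h3 : c n * B ^ n ≤ (B - 1) * B ^ n := Nat.mul_le_mul_right _ h2
    have h4 := pow_split (n := n) hB
    omega

lemma mod_pow_succ' {B : ℕ} (hB : 1 ≤ B) (i n : ℕ) :
    i % B ^ (n + 1) = (i / B ^ n % B) * B ^ n + i % B ^ n := by
  have hBn : 0 < B ^ n := Nat.pow_pos hB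
  have e1 : B * (i / B ^ n / B) + i / B ^ n % B = i / B ^ n := Nat.div_add_mod _ _
  have e2 : B ^ n * (i / B ^ n) + i % B ^ n = i := Nat.div_add_mod _ _
  have h1 : i = (i / B ^ n / B) * B ^ (n + 1) + ((i / B ^ n % B) * B ^ n + i % B ^ n) := by
    calc i = B ^ n * (i / B ^ n) + i % B ^ n := e2.symm
      _ = B ^ n * (B * (i / B ^ n / B) + i / B ^ n % B) + i % B ^ n := by rw [e1]
      _ = (i / B ^ n / B) * B ^ (n + 1) + ((i / B ^ n % B) * B ^ n + i % B ^ n) := by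
          rw [pow_succ]; ring
  have h2 : (i / B ^ n % B) * B ^ n + i % B ^ n < B ^ (n + 1) := by
    have m1 : i / B ^ n % B ≤ B - 1 := Nat.le_sub_one_of_lt (Nat.mod_lt _ hB)
    have m2 : i % B ^ n < B ^ n := Nat.mod_lt _ hBn
    have m3 : (i / B ^ n % B) * B ^ n ≤ (B - 1) * B ^ n := Nat.mul_le_mul_right _ m1
    have h4 := pow_split (n := n) hB
    rw [pow_succ]
    omega
  conv_lhs => rw [h1]
  rw [Nat.mul_comm, Nat.mul_add_mod, Nat.mod_eq_of_lt h2]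

lemma decR {B : ℕ} (hB : 1 ≤ B) {n i : ℕ} (hi : i < B ^ n) :
    ∑ s ∈ range n, (i / B ^ s % B) * B ^ s = i := by
  have key : ∀ m, ∑ s ∈ range m, (i / B ^ s % B) * B ^ s = i % B ^ m := by
    intro m
    induction m with
    | zero => simp [Nat.mod_one]
    | succ m ih => rw [Finset.sum_range_succ, ih, mod_pow_succ' hB]; omega
  rw [key n, Nat.mod_eq_of_lt hi]

lemma digR {B : ℕ} (hB : 1 ≤ B) {n : ℕ} {c : ℕ → ℕ} (hc : ∀ s < n, c s < B)
    {e : ℕ} (he : e < n) : (∑ s ∈ range n, c s * B ^ s) / B ^ e % B = c e := by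
  have hBe : 0 < B ^ e := Nat.pow_pos hB
  have split : ∑ s ∈ range n, c s * B ^ s
      = (∑ s ∈ range e, c s * B ^ s)
        + B ^ e * (c e + B * ∑ s ∈ range (n - e - 1), c (e+1+s) * B ^ s) := by
    have h1 : range n = range e ∪ Finset.Ico e n := by
      rw [Finset.range_eq_Ico, Finset.range_eq_Ico, Finset.Ico_union_Ico_eq_Ico] <;> omega
    rw [h1, Finset.sum_union (by simp [Finset.disjoint_left]; omega)]
    congr 1
    have h2 : Finset.Ico e n = insert e (Finset.Ico (e+1) n) := (Finset.insert_Ico_add_one_left_eq_Ico he).symm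
    rw [h2, Finset.sum_insert (by simp)]
    rw [Finset.sum_Ico_eq_sum_range, show n - (e+1) = n - e - 1 by omega]
    have h3 : ∑ s ∈ range (n - e - 1), c (e + 1 + s) * B ^ (e + 1 + s)
        = ∑ s ∈ range (n - e - 1), (B ^ e * B) * (c (e+1+s) * B ^ s) := by
      refine Finset.sum_congr rfl (fun s _ => ?_)
      rw [pow_add, pow_add, pow_one]; ring
    rw [h3, ← Finset.mul_sum]
    ring
  rw [split]
  have hL : ∑ s ∈ range e, c s * B ^ s < B ^ e :=
    encR_lt hB (fun s hs => hc s (lt_trans hs he))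
  rw [Nat.add_mul_div_left _ _ hBe, Nat.div_eq_of_lt hL, Nat.zero_add,
    Nat.add_mul_mod_self_left, Nat.mod_eq_of_lt (hc e he)]



def encF (d t : ℕ) (ψ : Fin d → ℕ) : ℕ := ∑ r : Fin d, ψ r * (t + 1) ^ (d - 1 - (r : ℕ))

lemma sum_fin_rev {d : ℕ} (g : ℕ → ℕ) :
    ∑ r : Fin d, g (d - 1 - (r : ℕ)) = ∑ s ∈ range d, g s := by
  refine Finset.sum_bij' (fun (r : Fin d) _ => d - 1 - (r : ℕ))
    (fun s hs => (⟨d - 1 - s, by simp at hs; omega⟩ : Fin d)) ?_ ?_ ?_ ?_ ?_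
  · intro r _; simp; omega
  · intro s hs; simp
  · intro r _; apply Fin.ext; simp; omega
  · intro s hs; simp at hs ⊢; omega
  · intro r _; rfl

lemma digit_le (d t i : ℕ) (r : Fin d) : digit d t i r ≤ t :=
  Nat.le_of_lt_succ (Nat.mod_lt _ (Nat.succ_pos t))

lemma encF_eq {d t : ℕ} (ψ : Fin d → ℕ) :
    encF d t ψ = ∑ s ∈ range d,
      (fun s => if h : s < d then ψ ⟨d - 1 - s, by omega⟩ else 0) s * (t + 1) ^ s := by
  rw [encF, ← sum_fin_rev (fun e => (if h : e < d then ψ ⟨d - 1 - e, by omega⟩ else 0) * (t+1)^e)]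
  refine Finset.sum_congr rfl (fun r _ => ?_)
  have hr : (r : ℕ) < d := r.isLt
  have h1 : d - 1 - (d - 1 - (r : ℕ)) = (r : ℕ) := by omega
  rw [dif_pos (show d - 1 - (r : ℕ) < d by omega)]
  have h2 : (⟨d - 1 - (d - 1 - (r : ℕ)), by omega⟩ : Fin d) = r := Fin.ext (by simpa using h1)
  rw [h2]

lemma digit_encF {d t : ℕ} {ψ : Fin d → ℕ} (hψ : ∀ r, ψ r ≤ t) (r : Fin d) :
    digit d t (encF d t ψ) r = ψ r := by
  have hr : (r : ℕ) < d := r.isLt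
  rw [digit, encF_eq, digR (Nat.le_add_left 1 t)
    (by intro s hs; rw [dif_pos hs]; exact Nat.lt_succ_of_le (hψ _))
    (show d - 1 - (r : ℕ) < d by omega)]
  rw [dif_pos (show d - 1 - (r:ℕ) < d by omega)]
  have h2 : (⟨d - 1 - (d - 1 - (r : ℕ)), by omega⟩ : Fin d) = r := Fin.ext (by simp; omega)
  rw [h2]

lemma encF_digit {d t i : ℕ} (hi : i < (t + 1) ^ d) : encF d t (digit d t i) = i := by
  have h0 : encF d t (digit d t i)
      = ∑ r : Fin d, (fun e => (i / (t+1)^e % (t+1)) * (t+1)^e) (d - 1 - (r:ℕ)) := rfl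
  rw [h0, sum_fin_rev (fun e => (i / (t+1)^e % (t+1)) * (t+1)^e)]
  exact decR (Nat.le_add_left 1 t) hi

lemma encF_lt {d t : ℕ} {ψ : Fin d → ℕ} (hψ : ∀ r, ψ r ≤ t) : encF d t ψ < (t + 1) ^ d := by
  rw [encF_eq]
  refine encR_lt (Nat.le_add_left 1 t) (fun s hs => ?_)
  rw [dif_pos hs]; exact Nat.lt_succ_of_le (hψ _)

lemma encF_mono {d t : ℕ} {φ ψ : Fin d → ℕ} (h : ∀ r, φ r ≤ ψ r) :
    encF d t φ ≤ encF d t ψ :=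
  Finset.sum_le_sum (fun r _ => Nat.mul_le_mul_right _ (h r))

lemma encF_zero {d t : ℕ} : encF d t (fun _ => 0) = 0 := by simp [encF]

lemma digit_zero {d t : ℕ} (r : Fin d) : digit d t 0 r = 0 := by simp [digit]

lemma relu_of_nonpos {z : ℝ} (h : z ≤ 0) : relu z = 0 := max_eq_left h
lemma relu_of_nonneg {z : ℝ} (h : 0 ≤ z) : relu z = z := max_eq_right h

lemma gUnit_grid {d t : ℕ} (ht : 1 ≤ t) {M : ℝ} (hM : 1 ≤ M) (a : ℝ) (i j : ℕ) :
    gUnit d t M a i (gridPt d t j)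
      = if (∀ r, digit d t i r ≤ digit d t j r) then a / t else 0 := by
  have htR : (0 : ℝ) < t := by exact_mod_cast Nat.lt_of_lt_of_le Nat.zero_lt_one ht
  rw [gUnit]
  split_ifs with h
  · have h1 : ∀ r ∈ (univ : Finset (Fin d)),
        -M * relu (-(gridPt d t j r) + gridPt d t i r) = 0 := by
      intro r _
      have hle : (digit d t i r : ℝ) ≤ (digit d t j r : ℝ) := by exact_mod_cast h r
      have harg : -(gridPt d t j r) + gridPt d t i r ≤ 0 := by
        have h2 : (digit d t i r : ℝ) / t ≤ (digit d t j r : ℝ) / t := by gcongr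
        simp only [gridPt]; linarith
      rw [relu_of_nonpos harg, mul_zero]
    rw [Finset.sum_eq_zero h1, zero_add, relu_of_nonneg (by positivity), mul_one_div]
  · push_neg at h
    obtain ⟨r0, hr0⟩ := h
    have hM0 : (0 : ℝ) ≤ M := le_trans zero_le_one hM
    have hterm : ∀ r : Fin d, -M * relu (-(gridPt d t j r) + gridPt d t i r) ≤ 0 := by
      intro r
      have h2 : 0 ≤ M * relu (-(gridPt d t j r) + gridPt d t i r) :=
        mul_nonneg hM0 (relu_nonneg _)
      linarith [neg_mul M (relu (-(gridPt d t j r) + gridPt d t i r))]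
    have hd : (digit d t j r0 : ℝ) + 1 ≤ (digit d t i r0 : ℝ) := by exact_mod_cast hr0
    have harg : 1 / (t : ℝ) ≤ -(gridPt d t j r0) + gridPt d t i r0 := by
      simp only [gridPt]
      have he : -((digit d t j r0 : ℝ) / t) + (digit d t i r0 : ℝ) / t
          = ((digit d t i r0 : ℝ) - (digit d t j r0 : ℝ)) / t := by ring
      rw [he]
      gcongr
      linarith
    have hr0' : -M * relu (-(gridPt d t j r0) + gridPt d t i r0) ≤ -(1 / t) := by
      rw [relu_of_nonneg (le_trans (by positivity) harg)]
      nlinarith [div_pos one_pos htR]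
    have key : (∑ r : Fin d, -M * relu (-(gridPt d t j r) + gridPt d t i r)) + 1 / t ≤ 0 := by
      have hsplit : ∑ r : Fin d, -M * relu (-(gridPt d t j r) + gridPt d t i r)
          = -M * relu (-(gridPt d t j r0) + gridPt d t i r0)
            + ∑ r ∈ univ.erase r0, -M * relu (-(gridPt d t j r) + gridPt d t i r) :=
        (Finset.add_sum_erase _ _ (mem_univ r0)).symm
      have hrest : ∑ r ∈ univ.erase r0, -M * relu (-(gridPt d t j r) + gridPt d t i r) ≤ 0 :=
        Finset.sum_nonpos (fun r _ => hterm r)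
      rw [hsplit]; linarith
    rw [relu_of_nonpos key, mul_zero]

lemma net_grid {d t : ℕ} (ht : 1 ≤ t) {M : ℝ} (hM : 1 ≤ M) (f : (Fin d → ℝ) → ℝ) (n j : ℕ) :
    net d t M f n (gridPt d t j) = f (fun _ => 0) +
      (∑ i ∈ Finset.Icc 1 n,
        if (∀ r, digit d t i r ≤ digit d t j r) then coef d t M f i else 0) / t := by
  induction n with
  | zero => simp [net]
  | succ n ih =>
    have hc : (t : ℝ) * (f (gridPt d t (n + 1)) - net d t M f n (gridPt d t (n + 1)))
        = coef d t M f (n + 1) := rfl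
    show net d t M f n (gridPt d t j) + gUnit d t M _ (n + 1) (gridPt d t j) = _
    rw [ih, hc, gUnit_grid ht hM]
    rw [Finset.sum_Icc_succ_top (by omega : 1 ≤ n + 1)]
    split_ifs with hcond
    · rw [add_div _ (coef d t M f (n+1))]; ring
    · rw [add_zero, add_zero]

lemma coef_sum {d t : ℕ} (ht : 1 ≤ t) {M : ℝ} (hM : 1 ≤ M) (f : (Fin d → ℝ) → ℝ)
    {i : ℕ} (hi : 1 ≤ i) :
    ∑ j ∈ Finset.Icc 1 i, (if (∀ r, digit d t j r ≤ digit d t i r) then coef d t M f j else 0)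
      = (t : ℝ) * (f (gridPt d t i) - f (fun _ => 0)) := by
  have htR : (0 : ℝ) < t := by exact_mod_cast Nat.lt_of_lt_of_le Nat.zero_lt_one ht
  obtain ⟨m, rfl⟩ : ∃ m, i = m + 1 := ⟨i - 1, by omega⟩
  rw [Finset.sum_Icc_succ_top (by omega : 1 ≤ m + 1), if_pos (fun r => le_refl _)]
  have h2 : coef d t M f (m + 1)
      = (t : ℝ) * (f (gridPt d t (m + 1)) - net d t M f m (gridPt d t (m + 1))) := rfl
  rw [h2, net_grid ht hM f m (m + 1)]
  field_simp
  ring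



def Fv (d t : ℕ) (f : (Fin d → ℝ) → ℝ) (ψ : Fin d → ℕ) : ℝ :=
  (t : ℝ) * (f (fun r => (ψ r : ℝ) / t) - f (fun _ => 0))

def suppF {d : ℕ} (ψ : Fin d → ℕ) : Finset (Fin d) :=
  Finset.univ.filter (fun r => 1 ≤ ψ r)

def sub1 {d : ℕ} (ψ : Fin d → ℕ) (s : Finset (Fin d)) : Fin d → ℕ :=
  fun r => ψ r - (if r ∈ s then 1 else 0)

def add1 {d : ℕ} (ψ : Fin d → ℕ) (s : Finset (Fin d)) : Fin d → ℕ :=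
  fun r => ψ r + (if r ∈ s then 1 else 0)

def cM (d t : ℕ) (f : (Fin d → ℝ) → ℝ) (ψ : Fin d → ℕ) : ℝ :=
  ∑ s ∈ (suppF ψ).powerset, (-1 : ℝ) ^ s.card * Fv d t f (sub1 ψ s)

def Tset {d : ℕ} (ψ θ : Fin d → ℕ) : Finset (Fin d) :=
  Finset.univ.filter (fun r => θ r + 1 ≤ ψ r)

lemma pow_sum_real {α : Type*} [DecidableEq α] (T : Finset α) :
    ∑ s ∈ T.powerset, (-1 : ℝ) ^ s.card = if T = ∅ then 1 else 0 := by
  have h := Finset.sum_powerset_neg_one_pow_card (x := T)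
  have h2 : ∑ s ∈ T.powerset, (-1 : ℝ) ^ s.card
      = ((∑ s ∈ T.powerset, (-1 : ℤ) ^ s.card : ℤ) : ℝ) := by push_cast; rfl
  rw [h2, h]; split_ifs <;> simp

lemma cM_zero (d t : ℕ) (f : (Fin d → ℝ) → ℝ) : cM d t f (fun _ => 0) = 0 := by
  have hs : suppF (fun _ : Fin d => 0) = ∅ := by simp [suppF]
  rw [cM, hs]
  simp [Fv, sub1]

lemma inversion (d t : ℕ) (f : (Fin d → ℝ) → ℝ) (ψ : Fin d → ℕ) :
    ∑ φ ∈ Finset.Iic ψ, cM d t f φ = Fv d t f ψ := by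
  classical
  have step1 : ∑ φ ∈ Finset.Iic ψ, cM d t f φ
      = ∑ p ∈ (Finset.Iic ψ).sigma (fun φ => (suppF φ).powerset),
          (-1 : ℝ) ^ p.2.card * Fv d t f (sub1 p.1 p.2) := by
    rw [Finset.sum_sigma]
    rfl
  have step2 : ∑ p ∈ (Finset.Iic ψ).sigma (fun φ => (suppF φ).powerset),
          (-1 : ℝ) ^ p.2.card * Fv d t f (sub1 p.1 p.2)
      = ∑ q ∈ (Finset.Iic ψ).sigma (fun θ => (Tset ψ θ).powerset),
          (-1 : ℝ) ^ q.2.card * Fv d t f q.1 := by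
    refine Finset.sum_bij' (fun p _ => (⟨sub1 p.1 p.2, p.2⟩ : Σ _ : Fin d → ℕ, Finset (Fin d)))
      (fun q _ => (⟨add1 q.1 q.2, q.2⟩ : Σ _ : Fin d → ℕ, Finset (Fin d))) ?_ ?_ ?_ ?_ ?_
    · rintro ⟨φ, s⟩ hp
      rw [Finset.mem_sigma] at hp ⊢
      obtain ⟨h1, h2⟩ := hp
      rw [Finset.mem_Iic, Pi.le_def] at h1
      rw [Finset.mem_powerset] at h2
      constructor
      · rw [Finset.mem_Iic, Pi.le_def]
        intro r
        exact le_trans (Nat.sub_le _ _) (h1 r)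
      · rw [Finset.mem_powerset]
        intro r hr
        have hφ : 1 ≤ φ r := by
          have := h2 hr
          simpa [suppF] using this
        rw [Tset, Finset.mem_filter]
        simp only [Finset.mem_univ, true_and, sub1, if_pos (show r ∈ s from hr)]
        have h1r : φ r ≤ ψ r := h1 r
        have hφ1 : 1 ≤ φ r := hφ
        omega
    · rintro ⟨θ, s⟩ hq
      rw [Finset.mem_sigma] at hq ⊢
      obtain ⟨h1, h2⟩ := hq
      rw [Finset.mem_Iic, Pi.le_def] at h1
      rw [Finset.mem_powerset] at h2
      constructor
      · rw [Finset.mem_Iic, Pi.le_def]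
        intro r
        by_cases hr : r ∈ s
        · have := h2 hr
          simp only [Tset, Finset.mem_filter] at this
          simp only [add1, if_pos hr]
          omega
        · simp only [add1, if_neg hr]
          simpa using h1 r
      · rw [Finset.mem_powerset]
        intro r hr
        rw [suppF, Finset.mem_filter]
        simp [add1, if_pos (show r ∈ s from hr)]
    · rintro ⟨φ, s⟩ hp
      rw [Finset.mem_sigma, Finset.mem_powerset] at hp
      have : add1 (sub1 φ s) s = φ := by
        funext r
        by_cases hr : r ∈ s
        · have hφ : 1 ≤ φ r := by
            have := hp.2 hr
            simpa [suppF] using this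
          simp only [add1, sub1, if_pos hr]
          omega
        · simp [add1, sub1, if_neg hr]
      simp [Sigma.ext_iff, this]
    · rintro ⟨θ, s⟩ hq
      have : sub1 (add1 θ s) s = θ := by
        funext r
        by_cases hr : r ∈ s <;> simp [add1, sub1, hr]
      simp [Sigma.ext_iff, this]
    · rintro ⟨φ, s⟩ _
      rfl
  have step3 : ∑ q ∈ (Finset.Iic ψ).sigma (fun θ => (Tset ψ θ).powerset),
          (-1 : ℝ) ^ q.2.card * Fv d t f q.1
      = ∑ θ ∈ Finset.Iic ψ, (if Tset ψ θ = ∅ then (1:ℝ) else 0) * Fv d t f θ := by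
    rw [Finset.sum_sigma]
    refine Finset.sum_congr rfl (fun θ _ => ?_)
    show ∑ s ∈ (Tset ψ θ).powerset, (-1 : ℝ) ^ s.card * Fv d t f θ = _
    rw [← Finset.sum_mul, pow_sum_real]
  rw [step1, step2, step3]
  rw [Finset.sum_eq_single ψ]
  · rw [if_pos (by simp [Tset, Finset.filter_eq_empty_iff]), one_mul]
  · intro θ hθ hne
    rw [Finset.mem_Iic, Pi.le_def] at hθ
    have hex : ∃ r, θ r ≠ ψ r := by
      by_contra hc; push_neg at hc; exact hne (funext hc)
    obtain ⟨r, hr⟩ := hex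
    have hmem : r ∈ Tset ψ θ := by
      simp only [Tset, Finset.mem_filter, Finset.mem_univ, true_and]
      have := hθ r
      omega
    rw [if_neg (Finset.ne_empty_of_mem hmem), zero_mul]
  · intro h
    exact absurd (Finset.mem_Iic.2 le_rfl) h




lemma digit_ne_zero {d t i : ℕ} (hi1 : 1 ≤ i) (hik : i < (t + 1) ^ d) :
    digit d t i ≠ (fun _ => 0) := by
  intro h
  have := encF_digit hik
  rw [h, encF_zero] at this
  omega

lemma sum_dig_eq {d t : ℕ} (g : (Fin d → ℕ) → ℝ) {i : ℕ} (hi1 : 1 ≤ i)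
    (hik : i < (t + 1) ^ d) :
    ∑ j ∈ (Finset.Icc 1 (i - 1)).filter (fun j => ∀ r, digit d t j r ≤ digit d t i r),
        g (digit d t j)
      = ∑ φ ∈ (Finset.Iic (digit d t i)).filter
          (fun φ => φ ≠ digit d t i ∧ φ ≠ (fun _ => 0)), g φ := by
  classical
  refine Finset.sum_bij' (fun j _ => digit d t j) (fun φ _ => encF d t φ) ?_ ?_ ?_ ?_ ?_
  · intro j hj
    rw [Finset.mem_filter, Finset.mem_Icc] at hj
    obtain ⟨⟨hj1, hj2⟩, hcond⟩ := hj
    have hjk : j < (t + 1) ^ d := by omega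
    rw [Finset.mem_filter, Finset.mem_Iic]
    refine ⟨Pi.le_def.2 hcond, ?_, digit_ne_zero hj1 hjk⟩
    intro he
    replace he : digit d t j = digit d t i := he
    have : j = i := by
      have h1 := encF_digit hjk
      have h2 := encF_digit hik
      rw [he] at h1; omega
    omega
  · intro φ hφ
    rw [Finset.mem_filter, Finset.mem_Iic, Pi.le_def] at hφ
    obtain ⟨hle, hne, hne0⟩ := hφ
    have hφt : ∀ r, φ r ≤ t := fun r => le_trans (hle r) (digit_le d t i r)
    have hdig : ∀ r, digit d t (encF d t φ) r = φ r := digit_encF hφt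
    have hmono : encF d t φ ≤ i := by
      have := encF_mono (t := t) hle
      rwa [encF_digit hik] at this
    have hne' : encF d t φ ≠ i := by
      intro he
      apply hne
      funext r
      rw [← hdig r, he]
    have hpos : 1 ≤ encF d t φ := by
      rcases Nat.eq_zero_or_pos (encF d t φ) with h0 | h1
      · exfalso
        apply hne0
        funext r
        rw [← hdig r, h0, digit_zero]
      · exact h1
    rw [Finset.mem_filter, Finset.mem_Icc]
    exact ⟨⟨hpos, by omega⟩, fun r => by rw [hdig r]; exact hle r⟩
  · intro j hj
    rw [Finset.mem_filter, Finset.mem_Icc] at hj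
    exact encF_digit (by omega)
  · intro φ hφ
    rw [Finset.mem_filter, Finset.mem_Iic, Pi.le_def] at hφ
    have hφt : ∀ r, φ r ≤ t := fun r => le_trans (hφ.1 r) (digit_le d t i r)
    funext r
    exact digit_encF hφt r
  · intro j _
    rfl

lemma coef_eq {d t : ℕ} (ht : 1 ≤ t) {M : ℝ} (hM : 1 ≤ M) (f : (Fin d → ℝ) → ℝ) :
    ∀ i, 1 ≤ i → i < (t + 1) ^ d → coef d t M f i = cM d t f (digit d t i) := by
  classical
  intro i
  induction i using Nat.strong_induction_on with
  | _ i IH =>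
    intro hi1 hik
    have hrec := coef_sum ht hM f hi1 (d := d) (M := M)
    have hFv : (t : ℝ) * (f (gridPt d t i) - f (fun _ => 0)) = Fv d t f (digit d t i) := rfl
    obtain ⟨m, hm⟩ : ∃ m, i = m + 1 := ⟨i - 1, by omega⟩
    rw [hm] at hrec
    rw [Finset.sum_Icc_succ_top (by omega : 1 ≤ m + 1), if_pos (fun r => le_refl _)] at hrec
    rw [← hm] at hrec
    -- hrec : ∑_{j ∈ Icc 1 m} ite + coef i = Fv (dig i)   (with m = i - 1)
    have hsum : ∑ j ∈ Finset.Icc 1 m,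
          (if (∀ r, digit d t j r ≤ digit d t i r) then coef d t M f j else 0)
        = ∑ φ ∈ (Finset.Iic (digit d t i)).filter
            (fun φ => φ ≠ digit d t i ∧ φ ≠ (fun _ => 0)), cM d t f φ := by
      have hm' : m = i - 1 := by omega
      rw [hm']
      rw [← sum_dig_eq (fun φ => cM d t f φ) hi1 hik, Finset.sum_filter]
      refine Finset.sum_congr rfl (fun j hj => ?_)
      rw [Finset.mem_Icc] at hj
      split_ifs with hc
      · exact IH j (by omega) hj.1 (by omega)
      · rfl
    -- decompose Iic
    set ψ := digit d t i with hψ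
    have hψ0 : ψ ≠ (fun _ => 0) := digit_ne_zero hi1 hik
    set S := (Finset.Iic ψ).filter (fun φ => φ ≠ ψ ∧ φ ≠ (fun _ => 0)) with hS
    have hIic : Finset.Iic ψ = insert ψ (insert (fun _ => 0) S) := by
      ext φ
      simp only [Finset.mem_insert, hS, Finset.mem_filter, Finset.mem_Iic]
      constructor
      · intro hle
        by_cases h1 : φ = ψ
        · exact Or.inl h1
        · by_cases h2 : φ = (fun _ => 0)
          · exact Or.inr (Or.inl h2)
          · exact Or.inr (Or.inr ⟨hle, h1, h2⟩)
      · rintro (h | h | h)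
        · exact h ▸ le_rfl
        · rw [h]; intro r; exact Nat.zero_le _
        · exact h.1
    have hn1 : ψ ∉ insert (fun _ : Fin d => 0) S := by
      intro hmem
      rcases Finset.mem_insert.1 hmem with h | h
      · exact hψ0 h
      · rw [hS, Finset.mem_filter] at h
        exact h.2.1 rfl
    have hn2 : (fun _ : Fin d => 0) ∉ S := by
      intro hmem
      rw [hS, Finset.mem_filter] at hmem
      exact hmem.2.2 rfl
    have hinv := inversion d t f ψ
    rw [hIic, Finset.sum_insert hn1, Finset.sum_insert hn2, cM_zero] at hinv
    -- hinv : cM ψ + (0 + ∑_S cM) = Fv ψ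
    rw [hsum] at hrec
    rw [hFv] at hrec
    -- hrec : ∑_S cM + coef i = Fv ψ
    linarith [hrec, hinv]

lemma cM_bound {d t : ℕ} (ht : 1 ≤ t) {ρ : ℝ} (hρ : 0 ≤ ρ) {f : (Fin d → ℝ) → ℝ}
    (hf : LipOneNorm d ρ (Set.Icc 0 1) f) {ψ : Fin d → ℕ} (hψt : ∀ r, ψ r ≤ t)
    (hψ0 : ∃ r0, 1 ≤ ψ r0) : |cM d t f ψ| ≤ 2 ^ (d - 1) * ρ := by
  classical
  have htR : (0 : ℝ) < t := by exact_mod_cast Nat.lt_of_lt_of_le Nat.zero_lt_one ht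
  obtain ⟨r0, hr0⟩ := hψ0
  have hr0mem : r0 ∈ suppF ψ := by simp [suppF, hr0]
  have hsupp : suppF ψ = insert r0 ((suppF ψ).erase r0) := (Finset.insert_erase hr0mem).symm
  rw [cM, hsupp, Finset.sum_powerset_insert (Finset.notMem_erase r0 _), ← Finset.sum_add_distrib]
  have hterm : ∀ s ∈ ((suppF ψ).erase r0).powerset,
      |(-1 : ℝ) ^ s.card * Fv d t f (sub1 ψ s)
        + (-1 : ℝ) ^ (insert r0 s).card * Fv d t f (sub1 ψ (insert r0 s))| ≤ ρ := by
    intro s hs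
    rw [Finset.mem_powerset] at hs
    have hr0s : r0 ∉ s := fun h => Finset.notMem_erase r0 _ (hs h)
    have hcard : (insert r0 s).card = s.card + 1 := Finset.card_insert_of_notMem hr0s
    rw [hcard, pow_succ]
    have habs : (-1 : ℝ) ^ s.card * Fv d t f (sub1 ψ s)
        + (-1 : ℝ) ^ s.card * (-1) * Fv d t f (sub1 ψ (insert r0 s))
        = (-1 : ℝ) ^ s.card * (Fv d t f (sub1 ψ s) - Fv d t f (sub1 ψ (insert r0 s))) := by
      ring
    rw [habs, abs_mul, abs_pow, abs_neg, abs_one, one_pow, one_mul]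
    -- Lipschitz estimate
    set a := sub1 ψ s
    set b := sub1 ψ (insert r0 s)
    have hat : ∀ r, a r ≤ t := fun r => le_trans (Nat.sub_le _ _) (hψt r)
    have hbt : ∀ r, b r ≤ t := fun r => le_trans (Nat.sub_le _ _) (hψt r)
    have hmem : ∀ (c : Fin d → ℕ), (∀ r, c r ≤ t) →
        (fun r => (c r : ℝ) / t) ∈ Set.Icc (0 : Fin d → ℝ) 1 := by
      intro c hc
      constructor
      · intro r; positivity
      · intro r
        have : (c r : ℝ) ≤ t := by exact_mod_cast hc r
        calc (c r : ℝ) / t ≤ (t : ℝ) / t := by gcongr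
          _ = 1 := div_self (ne_of_gt htR)
    have hlip := hf _ (hmem a hat) _ (hmem b hbt)
    have hab : ∀ r, r ≠ r0 → a r = b r := by
      intro r hr
      simp only [a, b, sub1]
      congr 1
      simp [Finset.mem_insert, hr]
    have har0 : a r0 = ψ r0 := by simp [a, sub1, hr0s]
    have hbr0 : b r0 = ψ r0 - 1 := by simp [b, sub1]
    have hsum : ∑ r : Fin d, |(a r : ℝ) / t - (b r : ℝ) / t| = 1 / t := by
      rw [Finset.sum_eq_single r0]
      · rw [har0, hbr0]
        have h1 : ((ψ r0 - 1 : ℕ) : ℝ) = (ψ r0 : ℝ) - 1 := by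
          have h2 : 1 ≤ ψ r0 := hr0
          push_cast [h2]
          ring
        rw [h1, show ((ψ r0 : ℝ)) / t - ((ψ r0 : ℝ) - 1) / t = 1 / t by ring]
        exact abs_of_nonneg (by positivity)
      · intro r _ hr
        rw [hab r hr, sub_self, abs_zero]
      · intro h
        exact absurd (Finset.mem_univ r0) h
    have hFv : |Fv d t f a - Fv d t f b|
        = (t : ℝ) * |f (fun r => (a r : ℝ) / t) - f (fun r => (b r : ℝ) / t)| := by
      rw [Fv, Fv]
      rw [show (t:ℝ) * (f (fun r => (a r:ℝ)/t) - f (fun _ => 0))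
          - (t:ℝ) * (f (fun r => (b r:ℝ)/t) - f (fun _ => 0))
          = (t:ℝ) * (f (fun r => (a r:ℝ)/t) - f (fun r => (b r:ℝ)/t)) by ring]
      rw [abs_mul, abs_of_pos htR]
    rw [hFv]
    calc (t : ℝ) * |f (fun r => (a r : ℝ) / t) - f (fun r => (b r : ℝ) / t)|
        ≤ (t : ℝ) * (ρ * ∑ r : Fin d, |(a r : ℝ) / t - (b r : ℝ) / t|) := by
          apply mul_le_mul_of_nonneg_left _ (le_of_lt htR)
          exact hlip
      _ = (t : ℝ) * (ρ * (1 / t)) := by rw [hsum]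
      _ = ρ := by field_simp
  calc |∑ s ∈ ((suppF ψ).erase r0).powerset,
        ((-1 : ℝ) ^ s.card * Fv d t f (sub1 ψ s)
          + (-1 : ℝ) ^ (insert r0 s).card * Fv d t f (sub1 ψ (insert r0 s)))|
      ≤ ∑ s ∈ ((suppF ψ).erase r0).powerset,
        |(-1 : ℝ) ^ s.card * Fv d t f (sub1 ψ s)
          + (-1 : ℝ) ^ (insert r0 s).card * Fv d t f (sub1 ψ (insert r0 s))| :=
        Finset.abs_sum_le_sum_abs _ _
    _ ≤ ∑ s ∈ ((suppF ψ).erase r0).powerset, ρ := Finset.sum_le_sum hterm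
    _ = (((suppF ψ).erase r0).powerset.card : ℝ) * ρ := by rw [Finset.sum_const, nsmul_eq_mul]
    _ ≤ 2 ^ (d - 1) * ρ := by
        apply mul_le_mul_of_nonneg_right _ hρ
        rw [Finset.card_powerset]
        have hcard : ((suppF ψ).erase r0).card ≤ d - 1 := by
          have h1 : ((suppF ψ).erase r0).card = (suppF ψ).card - 1 :=
            Finset.card_erase_of_mem hr0mem
          have h2 : (suppF ψ).card ≤ d := by
            calc (suppF ψ).card ≤ (Finset.univ : Finset (Fin d)).card :=
                Finset.card_le_card (Finset.filter_subset _ _)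
              _ = d := Finset.card_univ.trans (Fintype.card_fin d)
          omega
        calc ((2 ^ ((suppF ψ).erase r0).card : ℕ) : ℝ)
            ≤ ((2 ^ (d - 1) : ℕ) : ℝ) := by
              exact_mod_cast Nat.pow_le_pow_right (by norm_num) hcard
          _ = 2 ^ (d - 1) := by push_cast; ring

lemma relu_mem {d t : ℕ} (ht : 1 ≤ t) {M : ℝ} (hM : 0 ≤ M) (i : ℕ) (x : Fin d → ℝ) :
    0 ≤ relu ((∑ r : Fin d, -M * relu (-(x r) + gridPt d t i r)) + 1 / t) ∧
    relu ((∑ r : Fin d, -M * relu (-(x r) + gridPt d t i r)) + 1 / t) ≤ 1 / t := by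
  have htR : (0 : ℝ) < t := by exact_mod_cast Nat.lt_of_lt_of_le Nat.zero_lt_one ht
  refine ⟨relu_nonneg _, ?_⟩
  have hsum : (∑ r : Fin d, -M * relu (-(x r) + gridPt d t i r)) ≤ 0 := by
    apply Finset.sum_nonpos
    intro r _
    have := mul_nonneg hM (relu_nonneg (-(x r) + gridPt d t i r))
    linarith [neg_mul M (relu (-(x r) + gridPt d t i r))]
  exact max_le (by positivity) (by linarith)

lemma gUnit_diff {d t : ℕ} (ht : 1 ≤ t) {M : ℝ} (hM : 0 ≤ M) (a : ℝ) (i : ℕ)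
    (x x' : Fin d → ℝ) : |gUnit d t M a i x - gUnit d t M a i x'| ≤ |a| / t := by
  obtain ⟨h1, h2⟩ := relu_mem ht hM i x
  obtain ⟨h1', h2'⟩ := relu_mem ht hM i x'
  rw [gUnit, gUnit, ← mul_sub, abs_mul]
  rw [div_eq_mul_one_div |a| (t : ℝ)]
  apply mul_le_mul_of_nonneg_left _ (abs_nonneg a)
  rw [abs_sub_le_iff]
  constructor <;> linarith


/-- If f : [0,1]^d → ℝ is ρ-Lipschitz in 1-norm, then for every t ≥ 1,
M ≥ 1, index i ∈ {0,…,k−1} and pair of points x, x' with (x ∈ C_i and x' ∈ C'_i) or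
(x ∈ C'_i and x' ∈ C'_i): |f̂(x) − f̂(x')| ≤ k·d³·ρ·2^{d−1}/t, where k = (t+1)^d. -/
theorem stmt_7 (d t : ℕ) (hd : 1 ≤ d) (ht : 1 ≤ t) (M : ℝ) (hM : 1 ≤ M) (ρ : ℝ) (hρ : 0 ≤ ρ)
    (f : (Fin d → ℝ) → ℝ) (hf : LipOneNorm d ρ (Set.Icc 0 1) f) :
    ∀ i < (t + 1) ^ d, ∀ x x' : Fin d → ℝ,
      ((x ∈ cellInner d t M i ∧ x' ∈ cellBoundary d t M i) ∨
       (x ∈ cellBoundary d t M i ∧ x' ∈ cellBoundary d t M i)) →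
      |fHat d t M f x - fHat d t M f x'|
        ≤ ((t + 1 : ℝ)) ^ d * d ^ 3 * ρ * 2 ^ (d - 1) / t := by
  intro i hik x x' _
  have htR : (0 : ℝ) < t := by exact_mod_cast Nat.lt_of_lt_of_le Nat.zero_lt_one ht
  have hM0 : (0 : ℝ) ≤ M := le_trans zero_le_one hM
  set k := (t + 1) ^ d with hk
  have hdiff : fHat d t M f x - fHat d t M f x'
      = ∑ j ∈ Finset.Icc 1 (k - 1), (gHat d t M f j x - gHat d t M f j x') := by
    rw [fHat, fHat, Finset.sum_sub_distrib]
    ring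
  have hcoef : ∀ j ∈ Finset.Icc 1 (k - 1), |coef d t M f j| ≤ 2 ^ (d - 1) * ρ := by
    intro j hj
    rw [Finset.mem_Icc] at hj
    have hk2 : 2 ≤ k := by
      calc 2 = 2 ^ 1 := (pow_one 2).symm
        _ ≤ (t + 1) ^ 1 := Nat.pow_le_pow_left (by omega) 1
        _ ≤ (t + 1) ^ d := Nat.pow_le_pow_right (by omega) hd
    have hjk : j < k := by omega
    have hj1 : 1 ≤ j := hj.1
    rw [coef_eq ht hM f j hj1 hjk]
    apply cM_bound ht hρ hf (digit_le d t j)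
    by_contra hc
    push_neg at hc
    have hz : digit d t j = (fun _ => 0) := by
      funext r
      have := hc r
      omega
    exact digit_ne_zero hj1 hjk hz
  have hbound : ∀ j ∈ Finset.Icc 1 (k - 1),
      |gHat d t M f j x - gHat d t M f j x'| ≤ 2 ^ (d - 1) * ρ / t := by
    intro j hj
    calc |gHat d t M f j x - gHat d t M f j x'| ≤ |coef d t M f j| / t :=
        gUnit_diff ht hM0 _ j x x'
      _ ≤ 2 ^ (d - 1) * ρ / t := by gcongr; exact hcoef j hj
  calc |fHat d t M f x - fHat d t M f x'|
      = |∑ j ∈ Finset.Icc 1 (k - 1), (gHat d t M f j x - gHat d t M f j x')| := by rw [hdiff]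
    _ ≤ ∑ j ∈ Finset.Icc 1 (k - 1), |gHat d t M f j x - gHat d t M f j x'| :=
        Finset.abs_sum_le_sum_abs _ _
    _ ≤ ∑ _j ∈ Finset.Icc 1 (k - 1), (2 ^ (d - 1) * ρ / t) := Finset.sum_le_sum hbound
    _ = ((k - 1 : ℕ) : ℝ) * (2 ^ (d - 1) * ρ / t) := by
        rw [Finset.sum_const, nsmul_eq_mul, Nat.card_Icc]
        norm_num
    _ ≤ ((t + 1 : ℝ)) ^ d * d ^ 3 * ρ * 2 ^ (d - 1) / t := by
        have h1 : ((k - 1 : ℕ) : ℝ) ≤ ((k : ℕ) : ℝ) := by exact_mod_cast Nat.sub_le k 1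
        have h2 : ((k : ℕ) : ℝ) = ((t + 1 : ℝ)) ^ d := by rw [hk]; push_cast; ring
        have h3 : (1 : ℝ) ≤ (d : ℝ) ^ 3 := by
          have hd1 : (1 : ℝ) ≤ (d : ℝ) := by exact_mod_cast hd
          calc (1 : ℝ) = 1 ^ 3 := by norm_num
            _ ≤ (d : ℝ) ^ 3 := by gcongr <;> norm_num
        have h4 : (0 : ℝ) ≤ 2 ^ (d - 1) * ρ / t := by positivity
        have h5 : (0 : ℝ) < ((t + 1 : ℝ)) ^ d := by positivity
        calc ((k - 1 : ℕ) : ℝ) * (2 ^ (d - 1) * ρ / t)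
            ≤ ((t + 1 : ℝ)) ^ d * (2 ^ (d - 1) * ρ / t) := by
              apply mul_le_mul_of_nonneg_right _ h4
              rw [← h2]; exact h1
          _ ≤ (((t + 1 : ℝ)) ^ d * (d : ℝ) ^ 3) * (2 ^ (d - 1) * ρ / t) :=
              mul_le_mul_of_nonneg_right (le_mul_of_one_le_right h5.le h3) h4
          _ = ((t + 1 : ℝ)) ^ d * d ^ 3 * ρ * 2 ^ (d - 1) / t := by ring

end
end
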